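/- arXiv:1008.1948 — 6 statements merged into one kernel-verified Lean document; each statement's English description precedes it below -/
import Mathlib

section
/- Let s : Fin n → ℝ be defined recursively by s(0) = 1 and s(k) = sign(∑_{j<k} s(j)·⟨m_k, m_j⟩) for k ≥ 1, where m_0,…,m_{n-1} are vectors in a real inner product space. Then ∑_{i≠j} s(i)·s(j)·⟨m_i, m_j⟩ ≥ 0, and consequently ‖∑_i s(i)·m_i‖² ≥ ∑_i ‖m_i‖². -/
open RealInnerProductSpace Finset

/-- Sign-construction lemma: with the recursively defined signs
`s 0 = 1`, `s k = sign (∑_{j<k} s j ⟪m k, m j⟫)`, the off-diagonal sum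
is nonnegative and hence `‖∑ s i • m i‖² ≥ ∑ ‖m i‖²`. -/
theorem stmt0 {E : Type*} [NormedAddCommGroup E] [InnerProductSpace ℝ E]
    {n : ℕ} (m : Fin n → E) (s : Fin n → ℝ)
    (h0 : ∀ k : Fin n, (k : ℕ) = 0 → s k = 1)
    (hs : ∀ k : Fin n, 0 < (k : ℕ) →
      s k = if 0 ≤ ∑ j ∈ Finset.univ.filter (· < k), s j * ⟪m k, m j⟫
            then 1 else -1) :
    0 ≤ (∑ i : Fin n, ∑ j : Fin n, if i ≠ j then s i * s j * ⟪m i, m j⟫ else 0) ∧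
    (∑ i : Fin n, ‖m i‖ ^ 2) ≤ ‖∑ i : Fin n, s i • m i‖ ^ 2 := by
  set f : Fin n → Fin n → ℝ := fun i j => s i * s j * ⟪m i, m j⟫ with hf
  have hsym : ∀ i j, f i j = f j i := by
    intro i j; simp only [hf]; rw [real_inner_comm]; ring
  have hsq : ∀ i : Fin n, s i * s i = 1 := by
    intro i
    rcases Nat.eq_zero_or_pos (i : ℕ) with h | h
    · rw [h0 i h]; norm_num
    · rw [hs i h]; split_ifs <;> norm_num
  have hkey : ∀ k : Fin n,
      0 ≤ s k * ∑ j ∈ Finset.univ.filter (· < k), s j * ⟪m k, m j⟫ := by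
    intro k
    rcases Nat.eq_zero_or_pos (k : ℕ) with h | h
    · have he : Finset.univ.filter (· < k) = (∅ : Finset (Fin n)) := by
        ext j; simp [Fin.lt_def, h]
      rw [he]; simp
    · rw [hs k h]; split_ifs with hT
      · rw [one_mul]; exact hT
      · push_neg at hT; nlinarith
  have hkey' : ∀ k : Fin n, 0 ≤ ∑ j ∈ Finset.univ.filter (· < k), f k j := by
    intro k
    calc (0:ℝ) ≤ s k * ∑ j ∈ Finset.univ.filter (· < k), s j * ⟪m k, m j⟫ := hkey k
    _ = ∑ j ∈ Finset.univ.filter (· < k), f k j := by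
        rw [Finset.mul_sum]; apply Finset.sum_congr rfl; intro j _; simp only [hf]; ring
  -- split each row
  have hsplit : ∀ i : Fin n, (∑ j : Fin n, if i ≠ j then f i j else 0)
      = (∑ j ∈ Finset.univ.filter (· < i), f i j)
        + ∑ j ∈ Finset.univ.filter (i < ·), f i j := by
    intro i
    rw [← Finset.sum_filter, ← Finset.sum_union]
    · apply Finset.sum_congr _ (fun _ _ => rfl)
      ext j
      simp only [Finset.mem_filter, Finset.mem_union, Finset.mem_univ, true_and]
      constructor
      · intro hij; exact lt_or_gt_of_ne (Ne.symm hij)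
      · rintro (h | h)
        · exact ne_of_gt h
        · exact ne_of_lt h
    · rw [Finset.disjoint_filter]
      intro j _ hj hj'
      exact absurd (hj.trans hj') (lt_irrefl j)
  have hswap : (∑ i : Fin n, ∑ j ∈ Finset.univ.filter (i < ·), f i j)
      = ∑ i : Fin n, ∑ j ∈ Finset.univ.filter (· < i), f i j := by
    have : ∀ i : Fin n, (∑ j ∈ Finset.univ.filter (i < ·), f i j)
        = ∑ j : Fin n, if i < j then f i j else 0 := by
      intro i; rw [Finset.sum_filter]
    simp_rw [this]
    rw [Finset.sum_comm]
    apply Finset.sum_congr rfl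
    intro j _
    rw [Finset.sum_filter]
    apply Finset.sum_congr rfl
    intro i _
    split_ifs <;> simp [hsym]
  have hoff : 0 ≤ ∑ i : Fin n, ∑ j : Fin n, if i ≠ j then f i j else 0 := by
    calc (0:ℝ) ≤ ∑ i : Fin n, ((∑ j ∈ Finset.univ.filter (· < i), f i j)
          + ∑ j ∈ Finset.univ.filter (i < ·), f i j) := by
          rw [Finset.sum_add_distrib, hswap]
          have := Finset.sum_nonneg (fun i (_ : i ∈ Finset.univ) => hkey' i)
          linarith
      _ = _ := by rw [Finset.sum_congr rfl (fun i _ => (hsplit i).symm)]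
  refine ⟨hoff, ?_⟩
  have hnorm : ‖∑ i : Fin n, s i • m i‖ ^ 2
      = (∑ i : Fin n, ‖m i‖ ^ 2) + ∑ i : Fin n, ∑ j : Fin n, if i ≠ j then f i j else 0 := by
    rw [← real_inner_self_eq_norm_sq, sum_inner]
    simp_rw [inner_sum, real_inner_smul_left, real_inner_smul_right]
    have : ∀ i : Fin n, ∑ j : Fin n, s i * (s j * ⟪m i, m j⟫)
        = ‖m i‖ ^ 2 + ∑ j : Fin n, if i ≠ j then f i j else 0 := by
      intro i
      have h1 : ∀ j : Fin n, s i * (s j * ⟪m i, m j⟫)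
          = (if i = j then (‖m i‖:ℝ)^2 else 0) + (if i ≠ j then f i j else 0) := by
        intro j
        by_cases h : i = j
        · subst h
          simp [hf, real_inner_self_eq_norm_sq, ← mul_assoc, hsq i]
        · simp [h, hf]; ring
      simp_rw [h1]
      rw [Finset.sum_add_distrib, Finset.sum_ite_eq (Finset.univ) i (fun _ => (‖m i‖:ℝ)^2)]
      simp
    simp_rw [this]
    rw [Finset.sum_add_distrib]
  rw [hnorm]; linarith
end

section
/- For any finite family of vectors m_0,…,m_{n-1} in a real inner product space, there exists a choice of signs s : Fin n → ({-1, 1} : Set ℝ) such that ‖∑_i s(i)·m_i‖² ≥ ∑_i ‖m_i‖². -/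
open RealInnerProductSpace

/-- For any finite family of vectors in a real inner product space there is a
choice of signs `s : Fin n → {-1, 1}` with `‖∑ s i • m i‖² ≥ ∑ ‖m i‖²`. -/
theorem stmt1 {E : Type*} [NormedAddCommGroup E] [InnerProductSpace ℝ E]
    {n : ℕ} (m : Fin n → E) :
    ∃ s : Fin n → ℝ, (∀ i, s i = -1 ∨ s i = 1) ∧
      (∑ i : Fin n, ‖m i‖ ^ 2) ≤ ‖∑ i : Fin n, s i • m i‖ ^ 2 := by
  induction n with
  | zero => exact ⟨fun i => 1, fun i => i.elim0, by simp⟩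
  | succ n ih =>
    obtain ⟨s', hs', hle⟩ := ih (fun i => m i.castSucc)
    set x := ∑ i : Fin n, s' i • m i.castSucc with hx
    set v := m (Fin.last n) with hv
    set t : ℝ := if 0 ≤ ⟪x, v⟫ then 1 else -1 with ht
    have ht2 : t ^ 2 = 1 := by
      rcases le_or_gt 0 ⟪x, v⟫ with h | h
      · simp [ht, h]
      · simp [ht, not_le.mpr h]
    have htpos : 0 ≤ t * ⟪x, v⟫ := by
      rcases le_or_gt 0 ⟪x, v⟫ with h | h
      · simp [ht, h]
      · simp [ht, not_le.mpr h]; linarith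
    refine ⟨Fin.snoc s' t, ?_, ?_⟩
    · intro i
      induction i using Fin.lastCases with
      | last =>
          simp only [Fin.snoc_last, ht]
          split
          · right; rfl
          · left; rfl
      | cast j => simpa using hs' j
    · rw [Fin.sum_univ_castSucc, Fin.sum_univ_castSucc]
      simp only [Fin.snoc_castSucc, Fin.snoc_last]
      have key : ‖x + t • v‖ ^ 2 = ‖x‖ ^ 2 + 2 * (t * ⟪x, v⟫) + t ^ 2 * ‖v‖ ^ 2 := by
        rw [norm_add_sq_real, real_inner_smul_right, norm_smul]
        rw [Real.norm_eq_abs]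
        ring_nf
        rw [sq_abs]
      rw [key, ht2]
      have : (∑ i : Fin n, ‖m i.castSucc‖ ^ 2) ≤ ‖x‖ ^ 2 := hle
      nlinarith
end

section
/- Let vectors m_{x,a} ∈ ℝᵈ be given for x ∈ X, a ∈ A (finite index sets), and let S be the linear map from (ℝ^{X×A}, ‖·‖_{1(∞)}) to Euclidean ℝᵈ sending G to ∑_{x,a} G(x,a)·m_{x,a}. Then the operator norm of S equals max over x ∈ X and sign functions s : A → {-1,+1} of ‖∑_{a} s(a)·m_{x,a}‖₂. -/
open Finset

/-- The `1(∞)`-norm of `G ∈ ℝ^{X×A}`: `∑_x max_a |G (x,a)|`. -/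
noncomputable def normOneInf {X A : Type*} [Fintype X] [Fintype A] [Nonempty A]
    (G : X × A → ℝ) : ℝ :=
  ∑ x : X, Finset.univ.sup' Finset.univ_nonempty (fun a : A => |G (x, a)|)

/-- The operator norm of `G ↦ ∑_{x,a} G(x,a) • m_{x,a}` from
`(ℝ^{X×A}, ‖·‖_{1(∞)})` to `ℓ₂ᵈ`. -/
noncomputable def opNormOneInfTwo {X A : Type*} [Fintype X] [Fintype A] [Nonempty A]
    {d : ℕ} (m : X → A → EuclideanSpace ℝ (Fin d)) : ℝ :=
  sSup {r : ℝ | ∃ G : X × A → ℝ, normOneInf G ≤ 1 ∧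
    r = ‖∑ p : X × A, G p • m p.1 p.2‖}

lemma convex_step {E : Type*} [NormedAddCommGroup E] [NormedSpace ℝ E]
    (u y : E) (t : ℝ) (ht : |t| ≤ 1) :
    ‖u + t • y‖ ≤ max ‖u + y‖ ‖u - y‖ := by
  have h1 : 0 ≤ (1 + t) / 2 := by rw [abs_le] at ht; linarith [ht.1]
  have h2 : 0 ≤ (1 - t) / 2 := by rw [abs_le] at ht; linarith [ht.2]
  have key : u + t • y = ((1 + t) / 2) • (u + y) + ((1 - t) / 2) • (u - y) := by
    module
  calc ‖u + t • y‖ = ‖((1 + t) / 2) • (u + y) + ((1 - t) / 2) • (u - y)‖ := by rw [key]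
    _ ≤ ((1 + t) / 2) * ‖u + y‖ + ((1 - t) / 2) * ‖u - y‖ := by
        refine (norm_add_le _ _).trans ?_
        rw [norm_smul, norm_smul, Real.norm_eq_abs, Real.norm_eq_abs,
          abs_of_nonneg h1, abs_of_nonneg h2]
    _ ≤ ((1 + t) / 2) * max ‖u + y‖ ‖u - y‖ + ((1 - t) / 2) * max ‖u + y‖ ‖u - y‖ := by
        gcongr
        · exact le_max_left _ _
        · exact le_max_right _ _
    _ = max ‖u + y‖ ‖u - y‖ := by ring

lemma sign_lemma {E : Type*} [NormedAddCommGroup E] [NormedSpace ℝ E]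
    {A : Type*} (v : A → E) (F : Finset A) :
    ∀ (w : E) (t : A → ℝ), (∀ a, |t a| ≤ 1) →
    ∃ s : A → ℝ, (∀ a, s a = -1 ∨ s a = 1) ∧
      ‖w + ∑ a ∈ F, t a • v a‖ ≤ ‖w + ∑ a ∈ F, s a • v a‖ := by
  classical
  induction F using Finset.induction_on with
  | empty => intro w t _; exact ⟨fun _ => 1, fun _ => Or.inr rfl, by simp⟩
  | @insert a F ha ih =>
    intro w t ht
    obtain ⟨s, hs, hle⟩ := ih (w + t a • v a) t ht
    set u := w + ∑ b ∈ F, s b • v b with hu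
    have h1 : ‖w + ∑ b ∈ insert a F, t b • v b‖ ≤ ‖u + t a • v a‖ := by
      rw [Finset.sum_insert ha]
      calc ‖w + (t a • v a + ∑ b ∈ F, t b • v b)‖
          = ‖(w + t a • v a) + ∑ b ∈ F, t b • v b‖ := by congr 1; abel
        _ ≤ ‖(w + t a • v a) + ∑ b ∈ F, s b • v b‖ := hle
        _ = ‖u + t a • v a‖ := by rw [hu]; congr 1; abel
    have h2 : ‖u + t a • v a‖ ≤ max ‖u + v a‖ ‖u - v a‖ := convex_step u (v a) (t a) (ht a)
    have hsum : ∀ c : ℝ, ∑ b ∈ insert a F, (Function.update s a c) b • v b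
        = c • v a + ∑ b ∈ F, s b • v b := by
      intro c
      rw [Finset.sum_insert ha, Function.update_self]
      congr 1
      exact Finset.sum_congr rfl fun b hb => by
        rw [Function.update_of_ne (by rintro rfl; exact ha hb)]
    rcases le_total ‖u - v a‖ ‖u + v a‖ with h | h
    · refine ⟨Function.update s a 1, fun b => ?_, ?_⟩
      · by_cases hb : b = a
        · subst hb; rw [Function.update_self]; exact Or.inr rfl
        · rw [Function.update_of_ne hb]; exact hs b
      · rw [hsum]
        calc ‖w + ∑ b ∈ insert a F, t b • v b‖ ≤ max ‖u + v a‖ ‖u - v a‖ := h1.trans h2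
          _ = ‖u + v a‖ := max_eq_left h
          _ = ‖w + ((1:ℝ) • v a + ∑ b ∈ F, s b • v b)‖ := by rw [hu, one_smul]; congr 1; abel
    · refine ⟨Function.update s a (-1), fun b => ?_, ?_⟩
      · by_cases hb : b = a
        · subst hb; rw [Function.update_self]; exact Or.inl rfl
        · rw [Function.update_of_ne hb]; exact hs b
      · rw [hsum]
        calc ‖w + ∑ b ∈ insert a F, t b • v b‖ ≤ max ‖u + v a‖ ‖u - v a‖ := h1.trans h2
          _ = ‖u - v a‖ := max_eq_right h
          _ = ‖w + ((-1:ℝ) • v a + ∑ b ∈ F, s b • v b)‖ := by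
              rw [hu, neg_one_smul]; congr 1; abel


lemma key_scaled {E : Type*} [NormedAddCommGroup E] [NormedSpace ℝ E]
    {A : Type*} [Fintype A] [Nonempty A] (v : A → E) (t : A → ℝ) (c : ℝ)
    (hc : ∀ a, |t a| ≤ c) :
    ∃ s : A → ℝ, (∀ a, s a = -1 ∨ s a = 1) ∧
      ‖∑ a : A, t a • v a‖ ≤ c * ‖∑ a : A, s a • v a‖ := by
  have hc0 : 0 ≤ c := le_trans (abs_nonneg _) (hc (Classical.arbitrary A))
  rcases eq_or_lt_of_le hc0 with h0 | h0
  · refine ⟨fun _ => 1, fun _ => Or.inr rfl, ?_⟩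
    have ht0 : ∀ a, t a = 0 := fun a =>
      abs_eq_zero.mp (le_antisymm (h0 ▸ hc a) (abs_nonneg _))
    simp [ht0, ← h0]
  · obtain ⟨s, hs, hle⟩ := sign_lemma v Finset.univ 0 (fun a => t a / c)
      (fun a => by rw [abs_div, abs_of_pos h0, div_le_one h0]; exact hc a)
    refine ⟨s, hs, ?_⟩
    simp only [zero_add] at hle
    have : ∑ a : A, (t a / c) • v a = c⁻¹ • ∑ a : A, t a • v a := by
      rw [Finset.smul_sum]
      exact Finset.sum_congr rfl fun a _ => by
        rw [smul_smul, div_eq_inv_mul]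
    rw [this, norm_smul, Real.norm_eq_abs, abs_of_pos (inv_pos.mpr h0)] at hle
    calc ‖∑ a : A, t a • v a‖ = c * (c⁻¹ * ‖∑ a : A, t a • v a‖) := by
          field_simp
      _ ≤ c * ‖∑ a : A, s a • v a‖ := by gcongr

/-- The `1(∞) → 2` operator norm equals the maximum over `x` and sign
functions `s : A → {-1,+1}` of `‖∑_a s(a) • m_{x,a}‖₂`. -/
theorem stmt8 {X A : Type*} [Fintype X] [Fintype A] [Nonempty X] [Nonempty A]
    {d : ℕ} (m : X → A → EuclideanSpace ℝ (Fin d)) :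
    opNormOneInfTwo m =
      sSup {r : ℝ | ∃ (x : X) (s : A → ℝ), (∀ a, s a = -1 ∨ s a = 1) ∧
        r = ‖∑ a : A, s a • m x a‖} := by
  classical
  set R : Set ℝ := {r : ℝ | ∃ (x : X) (s : A → ℝ), (∀ a, s a = -1 ∨ s a = 1) ∧
        r = ‖∑ a : A, s a • m x a‖} with hR
  set L : Set ℝ := {r : ℝ | ∃ G : X × A → ℝ, normOneInf G ≤ 1 ∧
    r = ‖∑ p : X × A, G p • m p.1 p.2‖} with hL
  -- R is bounded above
  have hRbdd : BddAbove R := by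
    refine ⟨∑ x : X, ∑ a : A, ‖m x a‖, ?_⟩
    rintro r ⟨x, s, hs, rfl⟩
    calc ‖∑ a : A, s a • m x a‖ ≤ ∑ a : A, ‖s a • m x a‖ := norm_sum_le _ _
      _ = ∑ a : A, ‖m x a‖ := Finset.sum_congr rfl fun a _ => by
          rw [norm_smul, Real.norm_eq_abs]
          rcases hs a with h | h <;> simp [h]
      _ ≤ ∑ x : X, ∑ a : A, ‖m x a‖ := by
          refine Finset.single_le_sum (f := fun x => ∑ a : A, ‖m x a‖)
            (fun x _ => Finset.sum_nonneg fun a _ => norm_nonneg _) (Finset.mem_univ x)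
  have hRne : R.Nonempty :=
    ⟨_, Classical.arbitrary X, fun _ => 1, fun _ => Or.inr rfl, rfl⟩
  set M : ℝ := sSup R with hM
  have hMmem : ∀ r ∈ R, r ≤ M := fun r hr => le_csSup hRbdd hr
  have hM0 : 0 ≤ M := by
    obtain ⟨r, hr⟩ := hRne
    have : (0:ℝ) ≤ r := by obtain ⟨x, s, hs, rfl⟩ := hr; exact norm_nonneg _
    exact this.trans (hMmem _ hr)
  -- every element of L is ≤ M
  have hLub : ∀ r ∈ L, r ≤ M := by
    rintro r ⟨G, hG1, rfl⟩
    have hsum : ∑ p : X × A, G p • m p.1 p.2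
        = ∑ x : X, ∑ a : A, G (x, a) • m x a := by exact Fintype.sum_prod_type _
    rw [hsum]
    have hx : ∀ x : X, ‖∑ a : A, G (x, a) • m x a‖
        ≤ (Finset.univ.sup' Finset.univ_nonempty (fun a : A => |G (x, a)|)) * M := by
      intro x
      set c := Finset.univ.sup' Finset.univ_nonempty (fun a : A => |G (x, a)|) with hcdef
      obtain ⟨s, hs, hle⟩ := key_scaled (fun a => m x a) (fun a => G (x, a)) c
        (fun a => by show |G (x, a)| ≤ c; rw [hcdef]; exact Finset.le_sup' (fun a : A => |G (x, a)|) (Finset.mem_univ a))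
      have hc0 : 0 ≤ c := le_trans (abs_nonneg (G (x, Classical.arbitrary A)))
        (by rw [hcdef]; exact Finset.le_sup' (fun a : A => |G (x, a)|) (Finset.mem_univ _))
      refine hle.trans ?_
      gcongr
      exact hMmem _ ⟨x, s, hs, rfl⟩
    calc ‖∑ x : X, ∑ a : A, G (x, a) • m x a‖
        ≤ ∑ x : X, ‖∑ a : A, G (x, a) • m x a‖ := norm_sum_le _ _
      _ ≤ ∑ x : X, (Finset.univ.sup' Finset.univ_nonempty (fun a : A => |G (x, a)|)) * M :=
          Finset.sum_le_sum fun x _ => hx x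
      _ = normOneInf G * M := by rw [normOneInf, Finset.sum_mul]
      _ ≤ 1 * M := by gcongr
      _ = M := one_mul M
  have hLne : L.Nonempty := ⟨0, 0, by simp [normOneInf], by simp⟩
  have hLbdd : BddAbove L := ⟨M, hLub⟩
  -- R ⊆ L
  have hRL : R ⊆ L := by
    rintro r ⟨x, s, hs, rfl⟩
    refine ⟨fun p => if p.1 = x then s p.2 else 0, ?_, ?_⟩
    · have : ∀ x' : X, Finset.univ.sup' Finset.univ_nonempty
          (fun a : A => |if x' = x then s a else 0|) = if x' = x then 1 else 0 := by
        intro x'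
        by_cases hx' : x' = x
        · simp only [hx', if_true]
          have : ∀ a : A, |s a| = 1 := fun a => by rcases hs a with h | h <;> simp [h]
          simp only [this]
          exact Finset.sup'_const _ 1
        · simp only [hx', if_false, abs_zero]
          exact Finset.sup'_const _ 0
      rw [normOneInf]
      simp only [this]
      rw [Finset.sum_ite_eq' Finset.univ x (fun _ => (1:ℝ))]
      simp
    · rw [Fintype.sum_prod_type]
      have : ∀ x' : X, ∑ a : A, (if x' = x then s a else 0) • m x' a
          = if x' = x then ∑ a : A, s a • m x' a else 0 := by
        intro x'
        by_cases hx' : x' = x <;> simp [hx']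
      simp only [this]
      rw [Finset.sum_ite_eq' Finset.univ x (fun x' => ∑ a : A, s a • m x' a)]
      simp
  have h1 : opNormOneInfTwo m ≤ M := csSup_le hLne hLub
  have h2 : M ≤ opNormOneInfTwo m := csSup_le_csSup hLbdd hRne hRL
  exact le_antisymm h1 h2
end

section
/- Let vectors m_{x,a} ∈ ℝᵈ be given for x ∈ X, a ∈ A, and let S : (ℝ^{X×A}, ‖·‖_{1(∞)}) → ℓ₂ᵈ be the linear map G ↦ ∑_{x,a} G(x,a)·m_{x,a}. Then for every x ∈ X, the squared operator norm satisfies ‖S‖² ≥ ∑_{a∈A} ‖m_{x,a}‖₂². -/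
/-!
By the parallelogram law, `‖w + v‖² + ‖w - v‖² = 2 (‖w‖² + ‖v‖²)`, so one of `w ± v` has squared
norm at least `‖w‖² + ‖v‖²`. Choosing signs greedily gives `ε_a ∈ {±1}` with
`‖∑_a ε_a m_{x,a}‖² ≥ ∑_a ‖m_{x,a}‖²`. The test function equal to `ε` on row `x` and to `0`
elsewhere has `1(∞)`-norm at most `1` and is mapped by `S` to `∑_a ε_a m_{x,a}`.
-/

open Finset

section SignChoice

variable {E : Type*} [NormedAddCommGroup E] [InnerProductSpace ℝ E]

lemma exists_abs_eq_one_norm_sq_add_norm_sq_le (w v : E) :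
    ∃ σ : ℝ, |σ| = 1 ∧ ‖w‖ ^ 2 + ‖v‖ ^ 2 ≤ ‖w + σ • v‖ ^ 2 := by
  have parallelogram := parallelogram_law_with_norm ℝ w v
  by_cases hplus : ‖w‖ ^ 2 + ‖v‖ ^ 2 ≤ ‖w + v‖ ^ 2
  · exact ⟨1, by simp, by simpa using hplus⟩
  · refine ⟨-1, by simp, ?_⟩
    rw [neg_one_smul, ← sub_eq_add_neg]
    nlinarith

lemma exists_abs_le_one_sum_norm_sq_le {ι : Type*} [DecidableEq ι] (s : Finset ι) (v : ι → E) :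
    ∃ ε : ι → ℝ, (∀ i, |ε i| ≤ 1) ∧ ∑ i ∈ s, ‖v i‖ ^ 2 ≤ ‖∑ i ∈ s, ε i • v i‖ ^ 2 := by
  induction s using Finset.induction_on with
  | empty => exact ⟨0, by simp, by simp⟩
  | insert a s ha ih =>
    obtain ⟨ε, hε, hsum⟩ := ih
    obtain ⟨σ, hσ, hstep⟩ := exists_abs_eq_one_norm_sq_add_norm_sq_le (∑ i ∈ s, ε i • v i) (v a)
    refine ⟨Function.update ε a σ, fun i => ?_, ?_⟩
    · rcases eq_or_ne i a with rfl | hi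
      · simp [hσ]
      · simpa [hi] using hε i
    · have hrest : ∑ i ∈ s, Function.update ε a σ i • v i = ∑ i ∈ s, ε i • v i :=
        Finset.sum_congr rfl fun i hi => by rw [Function.update_of_ne (ne_of_mem_of_not_mem hi ha)]
      rw [sum_insert ha, sum_insert ha, hrest, Function.update_self, add_comm (σ • v a)]
      linarith

end SignChoice

section OneInfNorm

variable {X A : Type*} [Fintype X] [Fintype A] [Nonempty A]

lemma abs_le_normOneInf (G : X × A → ℝ) (p : X × A) : |G p| ≤ normOneInf G := by
  have row_le : |G p| ≤ univ.sup' univ_nonempty (fun a : A => |G (p.1, a)|) :=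
    le_sup' (fun a : A => |G (p.1, a)|) (mem_univ p.2)
  refine row_le.trans (single_le_sum (f := fun y => univ.sup' univ_nonempty
    (fun a : A => |G (y, a)|)) (fun y _ => ?_) (mem_univ p.1))
  exact (abs_nonneg _).trans (le_sup' (fun a : A => |G (y, a)|) (mem_univ (Classical.arbitrary A)))

lemma normOneInf_row_le_one [DecidableEq X] (x : X) {ε : A → ℝ} (hε : ∀ a, |ε a| ≤ 1) :
    normOneInf (fun p : X × A => if p.1 = x then ε p.2 else 0) ≤ 1 := by
  unfold normOneInf
  rw [sum_eq_single x (fun y _ hy => by simp [hy]) (by simp)]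
  simpa using hε

variable {d : ℕ} (m : X → A → EuclideanSpace ℝ (Fin d))

lemma bddAbove_norm_sum_smul_of_normOneInf_le_one :
    BddAbove {r : ℝ | ∃ G : X × A → ℝ, normOneInf G ≤ 1 ∧
      r = ‖∑ p : X × A, G p • m p.1 p.2‖} := by
  refine ⟨∑ p : X × A, ‖m p.1 p.2‖, ?_⟩
  rintro r ⟨G, hG, rfl⟩
  calc ‖∑ p : X × A, G p • m p.1 p.2‖ ≤ ∑ p : X × A, ‖G p • m p.1 p.2‖ := norm_sum_le _ _
    _ ≤ ∑ p : X × A, ‖m p.1 p.2‖ := by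
      gcongr with p
      rw [norm_smul, Real.norm_eq_abs]
      exact mul_le_of_le_one_left (norm_nonneg _) ((abs_le_normOneInf G p).trans hG)

lemma norm_sum_smul_le_opNormOneInfTwo {G : X × A → ℝ} (hG : normOneInf G ≤ 1) :
    ‖∑ p : X × A, G p • m p.1 p.2‖ ≤ opNormOneInfTwo m :=
  le_csSup (bddAbove_norm_sum_smul_of_normOneInf_le_one m) ⟨G, hG, rfl⟩

end OneInfNorm

theorem stmt9_general {X A : Type*} [Fintype X] [Fintype A] [Nonempty A]
    {d : ℕ} (m : X → A → EuclideanSpace ℝ (Fin d)) (x : X) :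
    (∑ a : A, ‖m x a‖ ^ 2) ≤ (opNormOneInfTwo m) ^ 2 := by
  classical
  obtain ⟨ε, hε, hsum⟩ := exists_abs_le_one_sum_norm_sq_le univ (m x)
  have hrow : ∑ p : X × A, (if p.1 = x then ε p.2 else 0) • m p.1 p.2 = ∑ a, ε a • m x a := by
    simp [Fintype.sum_prod_type, ite_smul]
  calc (∑ a : A, ‖m x a‖ ^ 2) ≤ ‖∑ a, ε a • m x a‖ ^ 2 := hsum
    _ ≤ (opNormOneInfTwo m) ^ 2 := by
      gcongr
      rw [← hrow]
      exact norm_sum_smul_le_opNormOneInfTwo m (normOneInf_row_le_one x hε)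

/-- For every `x`, the squared `1(∞) → 2` operator norm dominates
`∑_a ‖m_{x,a}‖₂²`. -/
theorem stmt9 {X A : Type*} [Fintype X] [Fintype A] [Nonempty X] [Nonempty A]
    {d : ℕ} (m : X → A → EuclideanSpace ℝ (Fin d)) (x : X) :
    (∑ a : A, ‖m x a‖ ^ 2) ≤ (opNormOneInfTwo m) ^ 2 :=
  stmt9_general m x
end

section
/- Define γ₂*(G) for G ∈ ℝ^{(X×A)×(Y×B)} as the infimum over all decompositions G((x,a),(y,b)) = ∑_{i,j} μ_{ij}·G_A^i(x,a)·G_B^j(y,b) (finite families) of ‖(μ_{ij})‖_{2→2} · (∑_i ‖G_A^i‖²_{1(∞)})^{1/2} · (∑_j ‖G_B^j‖²_{1(∞)})^{1/2}. Then γ₂* is submultiplicative under parallel composition: for games G₁ on (X₁×A₁)×(Y₁×B₁) and G₂ on (X₂×A₂)×(Y₂×B₂), γ₂*(G₁ ⊙ G₂) ≤ γ₂*(G₁)·γ₂*(G₂), where (G₁ ⊙ G₂)(((x₁,x₂),(a₁,a₂)),((y₁,y₂),(b₁,b₂))) = G₁((x₁,a₁),(y₁,b₁))·G₂((x₂,a₂),(y₂,b₂))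 viewed as bipartite with respect to the partition (X₁×A₁×X₂×A₂) : (Y₁×B₁×Y₂×B₂). -/
open Finset

/-- The `ℓ₂ → ℓ₂` operator norm of a real matrix. -/
noncomputable def opNorm2 {ι κ : Type*} [Fintype ι] [Fintype κ] [DecidableEq κ]
    (M : Matrix ι κ ℝ) : ℝ :=
  sSup {r : ℝ | ∃ v : EuclideanSpace ℝ κ, ‖v‖ ≤ 1 ∧
    r = ‖(Matrix.toEuclideanLin M) v‖}

/-- `γ₂*(G)`: the infimum over decompositions
`G = ∑_{i,j} μ_{ij} G_A^i ⊗ G_B^j` of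
`‖μ‖_{2→2} · ℓ₂(G_A^i; 1(∞)) · ℓ₂(G_B^j; 1(∞))`. -/
noncomputable def gamma2star {X A Y B : Type*}
    [Fintype X] [Fintype A] [Fintype Y] [Fintype B] [Nonempty A] [Nonempty B]
    (G : (X × A) × (Y × B) → ℝ) : ℝ :=
  sInf {r : ℝ | ∃ (n : ℕ) (μ : Matrix (Fin n) (Fin n) ℝ)
    (GA : Fin n → X × A → ℝ) (GB : Fin n → Y × B → ℝ),
    (∀ (x : X) (a : A) (y : Y) (b : B),
      G ((x, a), (y, b)) = ∑ i : Fin n, ∑ j : Fin n, μ i j * GA i (x, a) * GB j (y, b)) ∧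
    r = opNorm2 μ * Real.sqrt (∑ i : Fin n, (normOneInf (GA i)) ^ 2) *
        Real.sqrt (∑ j : Fin n, (normOneInf (GB j)) ^ 2)}

/-!
Given decompositions `G₁ = ∑ μ¹ᵢⱼ G_A^{1,i} ⊗ G_B^{1,j}` and `G₂ = ∑ μ²ₖₗ G_A^{2,k} ⊗ G_B^{2,l}`,
the parallel composition `G₁ ⊙ G₂` decomposes with the Kronecker product `μ¹ ⊗ μ²` and the local
functions `G_A^{1,i} ⊗ G_A^{2,k}`, `G_B^{1,j} ⊗ G_B^{2,l}` indexed by pairs. The `2 → 2` norm of a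
Kronecker product is at most the product of the norms (apply `μ¹` and `μ²` one tensor factor at a
time), and the `1(∞)`-norm of `f ⊗ g` is at most `‖f‖_{1(∞)} ‖g‖_{1(∞)}`, so the `ℓ₂`-sums factor
as well. Hence the cost of the product decomposition is at most the product of the two costs, and
passing to infima gives the inequality.
-/

open scoped Matrix.Norms.L2Operator Kronecker

namespace Matrix

theorem kronecker_mulVec_apply {R l m n p : Type*} [CommSemiring R] [Fintype m] [Fintype p]
    (A : Matrix l m R) (B : Matrix n p R) (x : m × p → R) (i : l) (k : n) :
    (A ⊗ₖ B *ᵥ x) (i, k) = (B *ᵥ fun q => (A *ᵥ fun j => x (j, q)) i) k := by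
  simp only [mulVec, dotProduct, kronecker_apply, Fintype.sum_prod_type, Finset.mul_sum]
  rw [Finset.sum_comm]
  exact Finset.sum_congr rfl fun _ _ => Finset.sum_congr rfl fun _ _ => by ring

theorem sum_kronecker_mul_mul_eq_mul {R ι₁ ι₂ κ₁ κ₂ : Type*} [CommSemiring R]
    [Fintype ι₁] [Fintype ι₂] [Fintype κ₁] [Fintype κ₂]
    (μ₁ : Matrix ι₁ κ₁ R) (μ₂ : Matrix ι₂ κ₂ R)
    (f₁ : ι₁ → R) (f₂ : ι₂ → R) (g₁ : κ₁ → R) (g₂ : κ₂ → R) :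
    ∑ p, ∑ q, (μ₁ ⊗ₖ μ₂) p q * (f₁ p.1 * f₂ p.2) * (g₁ q.1 * g₂ q.2) =
      (∑ i, ∑ j, μ₁ i j * f₁ i * g₁ j) * (∑ i, ∑ j, μ₂ i j * f₂ i * g₂ j) := by
  simp only [Finset.sum_mul_sum, Fintype.sum_prod_type, kronecker_apply]
  exact Finset.sum_congr rfl fun _ _ => Finset.sum_congr rfl fun _ _ =>
    Finset.sum_congr rfl fun _ _ => Finset.sum_congr rfl fun _ _ => by ring

variable {𝕜 : Type*} [RCLike 𝕜]

theorem sum_norm_sq_mulVec_le {m n : Type*} [Fintype m] [Fintype n] [DecidableEq n]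
    (A : Matrix m n 𝕜) (x : n → 𝕜) :
    ∑ i, ‖(A *ᵥ x) i‖ ^ 2 ≤ ‖A‖ ^ 2 * ∑ j, ‖x j‖ ^ 2 := by
  calc ∑ i, ‖(A *ᵥ x) i‖ ^ 2 = ‖(EuclideanSpace.equiv m 𝕜).symm (A *ᵥ x)‖ ^ 2 := by
        rw [EuclideanSpace.norm_sq_eq]; rfl
    _ ≤ (‖A‖ * ‖WithLp.toLp 2 x‖) ^ 2 := by gcongr; exact A.l2_opNorm_mulVec _
    _ = ‖A‖ ^ 2 * ∑ j, ‖x j‖ ^ 2 := by rw [mul_pow, EuclideanSpace.norm_sq_eq]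

theorem l2_opNorm_le_of_sum_norm_sq_mulVec_le {m n : Type*} [Fintype m] [Fintype n]
    [DecidableEq n] (A : Matrix m n 𝕜) {c : ℝ} (hc : 0 ≤ c)
    (h : ∀ x : n → 𝕜, ∑ i, ‖(A *ᵥ x) i‖ ^ 2 ≤ c ^ 2 * ∑ j, ‖x j‖ ^ 2) : ‖A‖ ≤ c := by
  rw [l2_opNorm_def]
  refine ContinuousLinearMap.opNorm_le_bound _ hc fun x => ?_
  refine pow_le_pow_iff_left₀ (norm_nonneg _) (by positivity) two_ne_zero |>.1 ?_
  rw [mul_pow, EuclideanSpace.norm_sq_eq, EuclideanSpace.norm_sq_eq]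
  exact h x.ofLp

theorem l2_opNorm_kronecker_le {l m n p : Type*} [Fintype l] [Fintype m] [Fintype n] [Fintype p]
    [DecidableEq m] [DecidableEq p] (A : Matrix l m 𝕜) (B : Matrix n p 𝕜) :
    ‖A ⊗ₖ B‖ ≤ ‖A‖ * ‖B‖ := by
  refine l2_opNorm_le_of_sum_norm_sq_mulVec_le _ (by positivity) fun x => ?_
  set u : l → p → 𝕜 := fun i q => (A *ᵥ fun j => x (j, q)) i
  calc ∑ ik, ‖(A ⊗ₖ B *ᵥ x) ik‖ ^ 2 = ∑ i, ∑ k, ‖(B *ᵥ u i) k‖ ^ 2 := by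
        simp only [Fintype.sum_prod_type, kronecker_mulVec_apply, u]
    _ ≤ ∑ i, ‖B‖ ^ 2 * ∑ q, ‖u i q‖ ^ 2 := by gcongr with i; exact sum_norm_sq_mulVec_le B _
    _ = ‖B‖ ^ 2 * ∑ q, ∑ i, ‖(A *ᵥ fun j => x (j, q)) i‖ ^ 2 := by
        rw [← Finset.mul_sum, Finset.sum_comm]
    _ ≤ ‖B‖ ^ 2 * ∑ q, ‖A‖ ^ 2 * ∑ j, ‖x (j, q)‖ ^ 2 := by
        gcongr with q; exact sum_norm_sq_mulVec_le A _
    _ = (‖A‖ * ‖B‖) ^ 2 * ∑ jq, ‖x jq‖ ^ 2 := by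
        rw [← Finset.mul_sum, Fintype.sum_prod_type, Finset.sum_comm]; ring

theorem l2_opNorm_reindex_le {m n m' n' : Type*} [Fintype m] [Fintype n] [Fintype m'] [Fintype n']
    [DecidableEq n] [DecidableEq n'] (e₁ : m ≃ m') (e₂ : n ≃ n') (A : Matrix m n 𝕜) :
    ‖reindex e₁ e₂ A‖ ≤ ‖A‖ := by
  refine l2_opNorm_le_of_sum_norm_sq_mulVec_le _ (norm_nonneg _) fun x => ?_
  calc ∑ i, ‖(reindex e₁ e₂ A *ᵥ x) i‖ ^ 2 = ∑ i, ‖(A *ᵥ (x ∘ e₂)) i‖ ^ 2 := by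
        rw [reindex_apply, submatrix_mulVec_equiv]
        exact e₁.symm.sum_comp fun i => ‖(A *ᵥ (x ∘ e₂)) i‖ ^ 2
    _ ≤ ‖A‖ ^ 2 * ∑ j, ‖x (e₂ j)‖ ^ 2 := sum_norm_sq_mulVec_le A _
    _ = ‖A‖ ^ 2 * ∑ j, ‖x j‖ ^ 2 := by rw [e₂.sum_comp fun j => ‖x j‖ ^ 2]

theorem l2_opNorm_reindex {m n m' n' : Type*} [Fintype m] [Fintype n] [Fintype m'] [Fintype n']
    [DecidableEq n] [DecidableEq n'] (e₁ : m ≃ m') (e₂ : n ≃ n') (A : Matrix m n 𝕜) :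
    ‖reindex e₁ e₂ A‖ = ‖A‖ :=
  le_antisymm (l2_opNorm_reindex_le e₁ e₂ A) <| by
    simpa using l2_opNorm_reindex_le e₁.symm e₂.symm (reindex e₁ e₂ A)

end Matrix

theorem Real.le_sInf_mul_sInf {S T : Set ℝ} (hS : S.Nonempty) (hT : T.Nonempty)
    (hS₀ : ∀ s ∈ S, 0 ≤ s) (hT₀ : ∀ t ∈ T, 0 ≤ t) {c : ℝ}
    (h : ∀ s ∈ S, ∀ t ∈ T, c ≤ s * t) : c ≤ sInf S * sInf T := by
  have hc : ∀ s ∈ S, c ≤ s * sInf T := fun s hs => by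
    rw [← smul_eq_mul, ← Real.sInf_smul_of_nonneg (hS₀ s hs)]
    exact le_csInf hT.smul_set (Set.forall_mem_image.2 fun t ht => h s hs t ht)
  rw [mul_comm, ← smul_eq_mul, ← Real.sInf_smul_of_nonneg (Real.sInf_nonneg hT₀)]
  exact le_csInf hS.smul_set
    (Set.forall_mem_image.2 fun s hs => (hc s hs).trans_eq (mul_comm _ _))

theorem opNorm2_eq_l2_opNorm {ι κ : Type*} [Fintype ι] [Fintype κ] [DecidableEq κ]
    (M : Matrix ι κ ℝ) : opNorm2 M = ‖M‖ := by
  rw [Matrix.l2_opNorm_def, ← ContinuousLinearMap.sSup_unitClosedBall_eq_norm]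
  refine congrArg sSup (Set.ext fun r => ⟨?_, ?_⟩)
  · rintro ⟨v, hv, rfl⟩
    exact ⟨v, mem_closedBall_zero_iff.2 hv, rfl⟩
  · rintro ⟨v, hv, rfl⟩
    exact ⟨v, mem_closedBall_zero_iff.1 hv, rfl⟩

theorem normOneInf_nonneg {X A : Type*} [Fintype X] [Fintype A] [Nonempty A] (G : X × A → ℝ) :
    0 ≤ normOneInf G :=
  Finset.sum_nonneg fun _ _ => Finset.le_sup'_of_le _ (Finset.mem_univ (Classical.arbitrary A))
    (abs_nonneg _)

def parTensor {X₁ A₁ X₂ A₂ : Type*} (f : X₁ × A₁ → ℝ) (g : X₂ × A₂ → ℝ) :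
    (X₁ × X₂) × (A₁ × A₂) → ℝ :=
  fun q => f (q.1.1, q.2.1) * g (q.1.2, q.2.2)

theorem normOneInf_parTensor_le {X₁ A₁ X₂ A₂ : Type*} [Fintype X₁] [Fintype A₁] [Fintype X₂]
    [Fintype A₂] [Nonempty A₁] [Nonempty A₂] (f : X₁ × A₁ → ℝ) (g : X₂ × A₂ → ℝ) :
    normOneInf (parTensor f g) ≤ normOneInf f * normOneInf g := by
  rw [normOneInf, normOneInf, normOneInf, Fintype.sum_prod_type, Finset.sum_mul_sum]
  gcongr with x₁ _ x₂ _
  refine Finset.sup'_le _ _ fun a _ => ?_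
  have hf := Finset.le_sup' (fun a₁ => |f (x₁, a₁)|) (Finset.mem_univ a.1)
  have hg := Finset.le_sup' (fun a₂ => |g (x₂, a₂)|) (Finset.mem_univ a.2)
  rw [parTensor, abs_mul]
  exact mul_le_mul hf hg (abs_nonneg _) ((abs_nonneg _).trans hf)

theorem sqrt_sum_normOneInf_parTensor_sq_le {ι κ X₁ A₁ X₂ A₂ : Type*} [Fintype ι] [Fintype κ]
    [Fintype X₁] [Fintype A₁] [Fintype X₂] [Fintype A₂] [Nonempty A₁] [Nonempty A₂]
    (F : ι → X₁ × A₁ → ℝ) (G : κ → X₂ × A₂ → ℝ) :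
    √(∑ p : ι × κ, normOneInf (parTensor (F p.1) (G p.2)) ^ 2) ≤
      √(∑ i, normOneInf (F i) ^ 2) * √(∑ k, normOneInf (G k) ^ 2) := by
  rw [← Real.sqrt_mul (by positivity), Finset.sum_mul_sum, Fintype.sum_prod_type]
  gcongr with i _ k _
  rw [← mul_pow]
  exact pow_le_pow_left₀ (normOneInf_nonneg _) (normOneInf_parTensor_le _ _) 2

section DecompositionCosts

variable {X A Y B : Type*} [Fintype X] [Fintype A] [Fintype Y] [Fintype B] [Nonempty A]
  [Nonempty B]

def decompositionCosts (G : (X × A) × (Y × B) → ℝ) : Set ℝ :=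
  {r : ℝ | ∃ (n : ℕ) (μ : Matrix (Fin n) (Fin n) ℝ)
    (GA : Fin n → X × A → ℝ) (GB : Fin n → Y × B → ℝ),
    (∀ (x : X) (a : A) (y : Y) (b : B),
      G ((x, a), (y, b)) = ∑ i : Fin n, ∑ j : Fin n, μ i j * GA i (x, a) * GB j (y, b)) ∧
    r = opNorm2 μ * Real.sqrt (∑ i : Fin n, (normOneInf (GA i)) ^ 2) *
        Real.sqrt (∑ j : Fin n, (normOneInf (GB j)) ^ 2)}

theorem gamma2star_def (G : (X × A) × (Y × B) → ℝ) :
    gamma2star G = sInf (decompositionCosts G) :=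
  rfl

theorem decompositionCosts_nonneg {G : (X × A) × (Y × B) → ℝ} :
    ∀ r ∈ decompositionCosts G, 0 ≤ r := by
  rintro _ ⟨n, μ, GA, GB, -, rfl⟩
  rw [opNorm2_eq_l2_opNorm]
  positivity

theorem mem_decompositionCosts {ι : Type*} [Fintype ι] [DecidableEq ι]
    {G : (X × A) × (Y × B) → ℝ} (μ : Matrix ι ι ℝ) (GA : ι → X × A → ℝ) (GB : ι → Y × B → ℝ)
    (hG : ∀ x a y b, G ((x, a), (y, b)) = ∑ i, ∑ j, μ i j * GA i (x, a) * GB j (y, b)) :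
    ‖μ‖ * √(∑ i, normOneInf (GA i) ^ 2) * √(∑ j, normOneInf (GB j) ^ 2) ∈
      decompositionCosts G := by
  let e := Fintype.equivFin ι
  refine ⟨_, Matrix.reindex e e μ, fun i => GA (e.symm i), fun j => GB (e.symm j),
    fun x a y b => ?_, ?_⟩
  · rw [hG]
    exact Fintype.sum_equiv e _ _ fun i => Fintype.sum_equiv e _ _ fun j => by simp
  · rw [opNorm2_eq_l2_opNorm, Matrix.l2_opNorm_reindex,
      e.symm.sum_comp fun i => normOneInf (GA i) ^ 2,
      e.symm.sum_comp fun j => normOneInf (GB j) ^ 2]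

theorem decompositionCosts_nonempty (G : (X × A) × (Y × B) → ℝ) :
    (decompositionCosts G).Nonempty := by
  classical
  refine ⟨_, mem_decompositionCosts (1 : Matrix (Y × B) (Y × B) ℝ) (fun q p => G (p, q))
    (fun q p => if q = p then 1 else 0) fun x a y b => ?_⟩
  simp [Matrix.one_apply]

theorem gamma2star_le {ι : Type*} [Fintype ι] [DecidableEq ι]
    {G : (X × A) × (Y × B) → ℝ} (μ : Matrix ι ι ℝ) (GA : ι → X × A → ℝ) (GB : ι → Y × B → ℝ)
    (hG : ∀ x a y b, G ((x, a), (y, b)) = ∑ i, ∑ j, μ i j * GA i (x, a) * GB j (y, b)) :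
    gamma2star G ≤ ‖μ‖ * √(∑ i, normOneInf (GA i) ^ 2) * √(∑ j, normOneInf (GB j) ^ 2) :=
  csInf_le ⟨0, decompositionCosts_nonneg⟩ (mem_decompositionCosts μ GA GB hG)

end DecompositionCosts

/-- `γ₂*` is submultiplicative under parallel composition of games, with
respect to the partition `(X₁×A₁×X₂×A₂) : (Y₁×B₁×Y₂×B₂)`. -/
theorem stmt14 {X₁ A₁ Y₁ B₁ X₂ A₂ Y₂ B₂ : Type*}
    [Fintype X₁] [Fintype A₁] [Fintype Y₁] [Fintype B₁]
    [Fintype X₂] [Fintype A₂] [Fintype Y₂] [Fintype B₂]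
    [Nonempty A₁] [Nonempty B₁] [Nonempty A₂] [Nonempty B₂]
    (G₁ : (X₁ × A₁) × (Y₁ × B₁) → ℝ) (G₂ : (X₂ × A₂) × (Y₂ × B₂) → ℝ) :
    gamma2star (fun z : ((X₁ × X₂) × (A₁ × A₂)) × ((Y₁ × Y₂) × (B₁ × B₂)) =>
        G₁ ((z.1.1.1, z.1.2.1), (z.2.1.1, z.2.2.1)) *
        G₂ ((z.1.1.2, z.1.2.2), (z.2.1.2, z.2.2.2))) ≤
      gamma2star G₁ * gamma2star G₂ := by
  rw [gamma2star_def G₁, gamma2star_def G₂]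
  refine Real.le_sInf_mul_sInf (decompositionCosts_nonempty G₁) (decompositionCosts_nonempty G₂)
    decompositionCosts_nonneg decompositionCosts_nonneg ?_
  rintro _ ⟨n₁, μ₁, GA₁, GB₁, hG₁, rfl⟩ _ ⟨n₂, μ₂, GA₂, GB₂, hG₂, rfl⟩
  calc _ ≤ ‖μ₁ ⊗ₖ μ₂‖
          * √(∑ p : Fin n₁ × Fin n₂, normOneInf (parTensor (GA₁ p.1) (GA₂ p.2)) ^ 2)
          * √(∑ p : Fin n₁ × Fin n₂, normOneInf (parTensor (GB₁ p.1) (GB₂ p.2)) ^ 2) :=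
        gamma2star_le _ _ _ fun x a y b => by
          show G₁ ((x.1, a.1), (y.1, b.1)) * G₂ ((x.2, a.2), (y.2, b.2)) = _
          rw [hG₁, hG₂]
          exact (Matrix.sum_kronecker_mul_mul_eq_mul _ _ _ _ _ _).symm
    _ ≤ (‖μ₁‖ * ‖μ₂‖)
          * (√(∑ i, normOneInf (GA₁ i) ^ 2) * √(∑ i, normOneInf (GA₂ i) ^ 2))
          * (√(∑ j, normOneInf (GB₁ j) ^ 2) * √(∑ j, normOneInf (GB₂ j) ^ 2)) := by
        gcongr ?_ * ?_ * ?_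
        · exact Matrix.l2_opNorm_kronecker_le μ₁ μ₂
        · exact sqrt_sum_normOneInf_parTensor_sq_le GA₁ GA₂
        · exact sqrt_sum_normOneInf_parTensor_sq_le GB₁ GB₂
    _ = _ := by rw [opNorm2_eq_l2_opNorm, opNorm2_eq_l2_opNorm]; ring
end

section
/- Let a, b be {-1, 1}-valued random outcomes such that for each x, y we have Pr[a = b | x,y] = (1 + ⟨m_x, n_y⟩)/2 and Pr[a ≠ b | x,y] = (1 - ⟨m_x, n_y⟩)/2, where m_x = m_{x,0} - m_{x,1} and n_y = n_{y,0} - n_{y,1} for vectors satisfying ‖m_{x,0} + m_{x,1}‖₂ ≤ 1, ‖m_{x,0} - m_{x,1}‖₂ ≤ 1, ‖n_{y,0} + n_{y,1}‖₂ ≤ 1, ‖n_{y,0} - n_{y,1}‖₂ ≤ 1. Then (1 + ⟨m_x, n_y⟩)/2 ≥ ⟨m_{x,0}, n_{y,0}⟩ + ⟨m_{x,1}, n_{y,1}⟩ and (1 - ⟨m_x, n_y⟩)/2 ≥ ⟨m_{x,0}, n_{y,1}⟩ + ⟨m_{x,1}, n_{y,0}⟩. -/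
open RealInnerProductSpace

/-- The algebraic inequalities used in the XOR-game argument: with
`m_x = m_{x,0} - m_{x,1}`, `n_y = n_{y,0} - n_{y,1}` and all of
`‖m_{x,0} ± m_{x,1}‖₂ ≤ 1`, `‖n_{y,0} ± n_{y,1}‖₂ ≤ 1`, one has
`(1 + ⟪m_x, n_y⟫)/2 ≥ ⟪m_{x,0}, n_{y,0}⟫ + ⟪m_{x,1}, n_{y,1}⟫` and
`(1 - ⟪m_x, n_y⟫)/2 ≥ ⟪m_{x,0}, n_{y,1}⟫ + ⟪m_{x,1}, n_{y,0}⟫`. -/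
theorem stmt18 {X Y : Type*} {d : ℕ}
    (m : X → Fin 2 → EuclideanSpace ℝ (Fin d))
    (n : Y → Fin 2 → EuclideanSpace ℝ (Fin d))
    (hmplus : ∀ x, ‖m x 0 + m x 1‖ ≤ 1) (hmminus : ∀ x, ‖m x 0 - m x 1‖ ≤ 1)
    (hnplus : ∀ y, ‖n y 0 + n y 1‖ ≤ 1) (hnminus : ∀ y, ‖n y 0 - n y 1‖ ≤ 1) :
    ∀ (x : X) (y : Y),
      ⟪m x 0, n y 0⟫ + ⟪m x 1, n y 1⟫ ≤
        (1 + ⟪m x 0 - m x 1, n y 0 - n y 1⟫) / 2 ∧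
      ⟪m x 0, n y 1⟫ + ⟪m x 1, n y 0⟫ ≤
        (1 - ⟪m x 0 - m x 1, n y 0 - n y 1⟫) / 2 := by
  intro x y
  have hp : ⟪m x 0 + m x 1, n y 0 + n y 1⟫ ≤ 1 := by
    calc ⟪m x 0 + m x 1, n y 0 + n y 1⟫ ≤ ‖m x 0 + m x 1‖ * ‖n y 0 + n y 1‖ :=
          real_inner_le_norm _ _
      _ ≤ 1 := by
          have := norm_nonneg (m x 0 + m x 1)
          have := norm_nonneg (n y 0 + n y 1)
          nlinarith [hmplus x, hnplus y]
  have hm : ⟪m x 0 - m x 1, n y 0 - n y 1⟫ ≤ 1 := by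
    calc ⟪m x 0 - m x 1, n y 0 - n y 1⟫ ≤ ‖m x 0 - m x 1‖ * ‖n y 0 - n y 1‖ :=
          real_inner_le_norm _ _
      _ ≤ 1 := by
          have := norm_nonneg (m x 0 - m x 1)
          have := norm_nonneg (n y 0 - n y 1)
          nlinarith [hmminus x, hnminus y]
  simp only [inner_add_left, inner_add_right, inner_sub_left, inner_sub_right] at *
  constructor <;> linarith
end
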